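/- Let p be an odd prime, d ≥ 2 with d ∣ p−1. For every k ≥ 0 and 0 ≤ ν ≤ d−1, the complex number n(k,ν) = Σ_{i=0}^{d−1} η_i^k · η_{i+ν} is a rational integer, i.e. lies in the image of ℤ in ℂ. -/

import Mathlib

open Finset

/-- The Gauss period `η_i = Σ_{u=0}^{f-1} ζ^{ω^{du+i}}`. -/
noncomputable def gaussPeriod (p d f : ℕ) (ω : (ZMod p)ˣ) (ζ : ℂ) (i : ℕ) : ℂ :=
  ∑ u ∈ Finset.range f, ζ ^ (((ω : ZMod p) ^ (d * u + i)).val)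

/-- The cyclotomic number `(i,j)` of order `d`. -/
noncomputable def cycNum (p d f : ℕ) (ω : (ZMod p)ˣ) (i j : ℕ) : ℕ :=
  Nat.card {uv : ℕ × ℕ // uv.1 < f ∧ uv.2 < f ∧
    (1 : ZMod p) + (ω : ZMod p) ^ (d * uv.1 + i) = (ω : ZMod p) ^ (d * uv.2 + j)}

/-- The cyclotomic integer `n(k,ν) = Σ_{i=0}^{d-1} η_i^k · η_{i+ν}`. -/
noncomputable def nInt (p d f : ℕ) (ω : (ZMod p)ˣ) (ζ : ℂ) (k ν : ℕ) : ℂ :=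
  ∑ i ∈ Finset.range d, (gaussPeriod p d f ω ζ i) ^ k * gaussPeriod p d f ω ζ (i + ν)

/-- `θ = 0` if `f` is even, `θ = d/2` if `f` is odd. -/
def theta (d f : ℕ) : ℕ := if Even f then 0 else d / 2

/-- `N(k,a)`: the number of `k`-tuples of nonzero `d`-th powers summing to `a`. -/
noncomputable def waringCount (p d k : ℕ) (a : ZMod p) : ℕ :=
  Nat.card {t : Fin k → ZMod p //
    (∀ i, ∃ b : (ZMod p)ˣ, ((b : ZMod p)) ^ d = t i) ∧ ∑ i, t i = a}

/-- `s_d(p,a)`: the least `k ≥ 1` such that `a` is a sum of `k` nonzero `d`-th powers. -/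
noncomputable def sWaring (p d : ℕ) (a : ZMod p) : ℕ :=
  sInf {k | 1 ≤ k ∧ ∃ u : Fin k → (ZMod p)ˣ, a = ∑ i, ((u i : ZMod p)) ^ d}

/-- `g_d(p) = max_{a ∈ 𝔽_p^*} s_d(p,a)`. -/
noncomputable def gWaring (p d : ℕ) : ℕ :=
  sSup {s | ∃ a : (ZMod p)ˣ, s = sWaring p d (a : ZMod p)}

/-- Product of a chain of cyclotomic numbers `(a,x₁)(x₁,x₂)⋯(xₘ,b)`. -/
noncomputable def chainProd (c : ℕ → ℕ → ℕ) (a b : ℕ) : List ℕ → ℕ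
  | [] => c a b
  | x :: xs => c a x * chainProd c x b xs

/-- Sum over all chains of `m` intermediate indices `0 ≤ i < d` of the products
`(a,i₂)(i₂,i₃)⋯(i_{m+1},b)` of consecutive cyclotomic numbers. -/
noncomputable def chainSum (d : ℕ) (c : ℕ → ℕ → ℕ) (a b m : ℕ) : ℕ :=
  ∑ v : Fin m → Fin d, chainProd c a b (List.ofFn fun i => ((v i : ℕ)))

/-!
With `ψ x = ζ ^ x.val`, a primitive additive character of `𝔽_p`, the Gauss periods are
`η_i = Σ_{u<f} ψ(ω^{du+i})`. Since `u ↦ ω^{du}` has period `f`, also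
`η_i = Σ_{t<f} ψ(ω^{du+i} ω^{dt})` for every `u`, and expanding `η_i^k η_{i+ν}` gives
`n(k,ν) = Σ_τ Σ_{i,u} ψ(ω^{du+i} b_τ)` with `b_τ = Σ_l ω^{dτ_l} + ω^ν`. As `ω^{du+i}` runs once
through `𝔽_p^*`, each inner sum is a complete character sum over the units, equal to `p - 1`
or `-1`.
-/

theorem Finset.sum_range_mul_eq_sum_sum {M : Type*} [AddCommMonoid M] (h : ℕ → M) (d f : ℕ) :
    ∑ j ∈ range (d * f), h j = ∑ u ∈ range f, ∑ i ∈ range d, h (d * u + i) := by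
  induction f with
  | zero => simp
  | succ f ih => rw [mul_add_one, sum_range_add, ih, sum_range_succ]

theorem Function.Periodic.sum_range_add {M : Type*} [AddCancelCommMonoid M] {h : ℕ → M} {f : ℕ}
    (hh : Function.Periodic h f) (c : ℕ) : ∑ t ∈ range f, h (c + t) = ∑ t ∈ range f, h t := by
  induction c with
  | zero => simp
  | succ c ih =>
    have := sum_range_succ (fun t => h (c + t)) f
    rw [sum_range_succ', add_zero, hh c] at this
    simpa only [add_assoc, add_comm 1, ih] using add_left_injective _ this

theorem IsCyclic.sum_range_orderOf_pow {G M : Type*} [Group G] [Fintype G] [DecidableEq G]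
    [AddCommMonoid M] {a : G} (ha : ∀ x : G, x ∈ Subgroup.zpowers a) (g : G → M) :
    ∑ j ∈ range (orderOf a), g (a ^ j) = ∑ x, g x := by
  rw [← IsCyclic.image_range_orderOf ha, sum_image (pow_injOn_Iio_orderOf.mono (by simp))]

theorem Fintype.sum_units_add_apply_zero {F M : Type*} [GroupWithZero F] [Fintype F]
    [DecidableEq F] [AddCommMonoid M] (g : F → M) : ∑ x : Fˣ, g x + g 0 = ∑ x, g x := by
  rw [← sum_erase_add univ g (mem_univ 0)]
  congr 1
  exact (Fintype.sum_equiv unitsEquivNeZero _ _ fun _ => rfl).trans (sum_subtype _ (by simp) g).symm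

namespace AddChar

theorem map_sum_eq_prod {A M ι : Type*} [AddCommMonoid A] [CommMonoid M] (ψ : AddChar A M)
    (s : Finset ι) (g : ι → A) : ψ (∑ i ∈ s, g i) = ∏ i ∈ s, ψ (g i) := by
  classical
  induction s using Finset.induction_on with
  | empty => simp
  | insert i s hi ih => rw [sum_insert hi, map_add_eq_mul, ih, prod_insert hi]

theorem sum_units_mulShift {F R : Type*} [Field F] [Fintype F] [DecidableEq F] [CommRing R]
    [IsDomain R] {ψ : AddChar F R} (hψ : ψ.IsPrimitive) (b : F) :
    ∑ x : Fˣ, ψ (x * b) = if b = 0 then (Fintype.card F : R) - 1 else -1 := by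
  rw [eq_sub_iff_add_eq.mpr (Fintype.sum_units_add_apply_zero fun x => ψ (x * b)),
    sum_mulShift b hψ]
  split_ifs <;> simp

section Period

variable {F R : Type*} [CommRing F] [CommRing R]

theorem sum_pow_mul {ι : Type*} (ψ : AddChar F R) (s : Finset ι) (a : ι → F) (c y : F) (k : ℕ) :
    (∑ t ∈ s, ψ (c * a t)) ^ k * ψ (c * y)
      = ∑ τ ∈ Fintype.piFinset fun _ : Fin k => s, ψ (c * (∑ l, a (τ l) + y)) := by
  simp only [sum_pow', sum_mul, mul_add, mul_sum, map_add_eq_mul, map_sum_eq_prod]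

noncomputable def period (ψ : AddChar F R) (ω : Fˣ) (d f i : ℕ) : R :=
  ∑ u ∈ range f, ψ ((ω : F) ^ (d * u + i))

variable {ψ : AddChar F R} {ω : Fˣ} {d f : ℕ}

theorem period_eq_sum_mul (hω : (ω : F) ^ (d * f) = 1) (i u : ℕ) :
    ψ.period ω d f i = ∑ t ∈ range f, ψ ((ω : F) ^ (d * u + i) * (ω : F) ^ (d * t)) := by
  have hper : Function.Periodic (fun t => ψ ((ω : F) ^ (d * t + i))) f := fun t => by
    simp only [mul_add, add_right_comm _ (d * f), pow_add _ (d * t + i), hω, mul_one]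
  rw [period, ← hper.sum_range_add u]
  simp only [← pow_add]
  congr! 3
  ring

theorem period_pow_mul (hω : (ω : F) ^ (d * f) = 1) (i k ν : ℕ) :
    ψ.period ω d f i ^ k * ψ.period ω d f (i + ν)
      = ∑ u ∈ range f, ∑ τ ∈ Fintype.piFinset fun _ : Fin k => range f,
          ψ ((ω : F) ^ (d * u + i) * (∑ l, (ω : F) ^ (d * τ l) + (ω : F) ^ ν)) := by
  rw [period, period, mul_sum]
  refine sum_congr rfl fun u _ => ?_
  rw [← period, period_eq_sum_mul hω i u, ← add_assoc, pow_add _ (d * u + i), sum_pow_mul]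

theorem sum_period_pow_mul [Fintype F] [DecidableEq F] (hω : ∀ x : Fˣ, x ∈ Subgroup.zpowers ω)
    (hcard : Fintype.card Fˣ = d * f) (k ν : ℕ) :
    ∑ i ∈ range d, ψ.period ω d f i ^ k * ψ.period ω d f (i + ν)
      = ∑ τ ∈ Fintype.piFinset fun _ : Fin k => range f,
          ∑ x : Fˣ, ψ (x * (∑ l, (ω : F) ^ (d * τ l) + (ω : F) ^ ν)) := by
  have horder : orderOf ω = d * f := by
    rw [orderOf_eq_card_of_forall_mem_zpowers hω, Nat.card_eq_fintype_card, hcard]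
  have hω1 : (ω : F) ^ (d * f) = 1 := by
    rw [← Units.val_pow_eq_pow_val, ← horder, pow_orderOf_eq_one, Units.val_one]
  simp only [period_pow_mul hω1]
  rw [sum_comm, sum_congr rfl fun u _ => sum_comm, sum_comm]
  refine sum_congr rfl fun τ _ => ?_
  rw [← IsCyclic.sum_range_orderOf_pow hω, horder, sum_range_mul_eq_sum_sum]
  simp only [Units.val_pow_eq_pow_val]

end Period

end AddChar

theorem nInt_is_integer_general (p d f : ℕ) (hp : p.Prime)
    (hdvd : d ∣ p - 1) (hf : f = (p - 1) / d)
    (ω : (ZMod p)ˣ) (hω : ∀ x : (ZMod p)ˣ, ∃ n : ℕ, ω ^ n = x)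
    (ζ : ℂ) (hζ : IsPrimitiveRoot ζ p)
    (k : ℕ) (ν : ℕ) :
    ∃ z : ℤ, nInt p d f ω ζ k ν = (z : ℂ) := by
  have : Fact p.Prime := ⟨hp⟩
  have hψ := AddChar.zmodChar_primitive_of_primitive_root p hζ
  have hnInt : nInt p d f ω ζ k ν = ∑ i ∈ range d,
      (AddChar.zmodChar p hζ.pow_eq_one).period ω d f i ^ k
        * (AddChar.zmodChar p hζ.pow_eq_one).period ω d f (i + ν) := rfl
  have hgen (x : (ZMod p)ˣ) : x ∈ Subgroup.zpowers ω :=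
    let ⟨n, hn⟩ := hω x; ⟨n, by simpa using hn⟩
  have hcard : Fintype.card (ZMod p)ˣ = d * f := by
    rw [ZMod.card_units, hf, Nat.mul_div_cancel' hdvd]
  rw [hnInt, AddChar.sum_period_pow_mul hgen hcard]
  simp only [AddChar.sum_units_mulShift hψ, ZMod.card]
  exact ⟨∑ τ ∈ Fintype.piFinset fun _ => range f,
    if ∑ l, (ω : ZMod p) ^ (d * τ l) + (ω : ZMod p) ^ ν = 0 then (p : ℤ) - 1 else -1,
    by push_cast; rfl⟩

/-- each `n(k,ν)` is a rational integer. -/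
theorem nInt_is_integer (p d f : ℕ) (hp : p.Prime) (hodd : Odd p)
    (hd : 2 ≤ d) (hdvd : d ∣ p - 1) (hf : f = (p - 1) / d)
    (ω : (ZMod p)ˣ) (hω : ∀ x : (ZMod p)ˣ, ∃ n : ℕ, ω ^ n = x)
    (ζ : ℂ) (hζ : IsPrimitiveRoot ζ p)
    (k : ℕ) (ν : ℕ) (hν : ν < d) :
    ∃ z : ℤ, nInt p d f ω ζ k ν = (z : ℂ) :=
  nInt_is_integer_general p d f hp hdvd hf ω hω ζ hζ k ν
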